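/- Define v : ℝ² × (−∞,0) → ℝ by v(x,t) = (1 + 2·cosh(−t)·‖x‖² + ‖x‖⁴)/(8·sinh(−t)). Then for every (x,t) ∈ ℝ² × (−∞,0), v(x,t)·Δv(x,t) − ‖∇v(x,t)‖² = (cosh(−t) + 2‖x‖² + cosh(−t)·‖x‖⁴)/(8·sinh(−t)²); in particular v·Δv − ‖∇v‖² > 0, so the scalar curvature R = v⁻¹(vΔv − ‖∇v‖²) of the conformal metric v⁻¹(dx₁²+dx₂²) is positive everywhere. -/

import Mathlib

/- We identify `ℝ²` with `ℂ`. Partial derivatives, the Laplacian, and the squared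
norm of the gradient with respect to the Euclidean metric on `ℝ² ≅ ℂ`. -/

/-- Partial derivative in the first Euclidean coordinate. -/
noncomputable def pdxR (f : ℂ → ℝ) (z : ℂ) : ℝ :=
  deriv (fun s : ℝ => f (z + (s : ℂ))) 0

/-- Partial derivative in the second Euclidean coordinate. -/
noncomputable def pdyR (f : ℂ → ℝ) (z : ℂ) : ℝ :=
  deriv (fun s : ℝ => f (z + (s : ℂ) * Complex.I)) 0

/-- Euclidean Laplacian on `ℝ² ≅ ℂ`. -/
noncomputable def lapR (f : ℂ → ℝ) (z : ℂ) : ℝ :=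
  pdxR (pdxR f) z + pdyR (pdyR f) z

/-- Squared Euclidean norm of the gradient on `ℝ² ≅ ℂ`. -/
noncomputable def gradSq (f : ℂ → ℝ) (z : ℂ) : ℝ :=
  (pdxR f z) ^ 2 + (pdyR f z) ^ 2

/-- The conformal factor of the King–Rosenau solution:
`v(x,t) = (1 + 2 cosh(−t) ‖x‖² + ‖x‖⁴)/(8 sinh(−t))`, for `t < 0`. -/
noncomputable def krV : ℂ × ℝ → ℝ :=
  fun p => (1 + 2 * Real.cosh (-p.2) * ‖p.1‖ ^ 2 + ‖p.1‖ ^ 4) / (8 * Real.sinh (-p.2))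

/-! A direct computation. The King–Rosenau factor is radial, `v = φ (‖x‖²)` with
`φ u = (1 + 2 cosh(−t) u + u²) / (8 sinh(−t))` quadratic, and for radial functions
`Δv = 4 (φ' + r φ'')` and `‖∇v‖² = 4 r φ'²` at `r = ‖x‖²`. Hence `v Δv − ‖∇v‖²` is a
polynomial in `r` divided by `8 sinh(−t)²`, whose numerator `cosh(−t) + 2 r + cosh(−t) r²` is
positive; so is `v` for `t < 0`, and therefore `R`. -/

open Complex
open scoped InnerProductSpace

section Radial

variable {φ φ' φ'' : ℝ → ℝ}

lemma hasDerivAt_const_add_ofReal_mul (z e : ℂ) :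
    HasDerivAt (fun s : ℝ => z + (s : ℂ) * e) e 0 := by
  simpa using ((hasDerivAt_id (0 : ℝ)).ofReal_comp.mul_const e).const_add z

lemma hasDerivAt_radial_along_line (hφ : ∀ u, HasDerivAt φ (φ' u) u) (z e : ℂ) :
    HasDerivAt (fun s : ℝ => φ (‖z + (s : ℂ) * e‖ ^ 2)) (φ' (‖z‖ ^ 2) * (2 * ⟪z, e⟫_ℝ)) 0 := by
  have hnorm := (hasDerivAt_const_add_ofReal_mul z e).norm_sq
  refine ((hφ (‖z‖ ^ 2)).comp_of_eq 0 hnorm (by simp)).congr_deriv ?_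
  simp

lemma hasDerivAt_radial_dirDeriv_along_line (hφ' : ∀ u, HasDerivAt φ' (φ'' u) u) (z e : ℂ) :
    HasDerivAt (fun s : ℝ => φ' (‖z + (s : ℂ) * e‖ ^ 2) * (2 * ⟪z + (s : ℂ) * e, e⟫_ℝ))
      (φ'' (‖z‖ ^ 2) * (2 * ⟪z, e⟫_ℝ) * (2 * ⟪z, e⟫_ℝ) + φ' (‖z‖ ^ 2) * (2 * ‖e‖ ^ 2)) 0 := by
  have hinner :=
    ((hasDerivAt_const_add_ofReal_mul z e).inner ℝ (hasDerivAt_const (0 : ℝ) e)).const_mul 2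
  refine ((hasDerivAt_radial_along_line hφ' z e).mul hinner).congr_deriv ?_
  simp

lemma pdxR_eq_deriv_add_ofReal_mul_one (f : ℂ → ℝ) (z : ℂ) :
    pdxR f z = deriv (fun s : ℝ => f (z + (s : ℂ) * 1)) 0 := by
  simp only [pdxR, mul_one]

lemma pdxR_radial (hφ : ∀ u, HasDerivAt φ (φ' u) u) (z : ℂ) :
    pdxR (fun w => φ (‖w‖ ^ 2)) z = φ' (‖z‖ ^ 2) * (2 * z.re) := by
  simpa [pdxR, Complex.inner] using (hasDerivAt_radial_along_line hφ z 1).deriv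

lemma pdyR_radial (hφ : ∀ u, HasDerivAt φ (φ' u) u) (z : ℂ) :
    pdyR (fun w => φ (‖w‖ ^ 2)) z = φ' (‖z‖ ^ 2) * (2 * z.im) := by
  simpa [pdyR, Complex.inner] using (hasDerivAt_radial_along_line hφ z I).deriv

lemma lapR_radial (hφ : ∀ u, HasDerivAt φ (φ' u) u) (hφ' : ∀ u, HasDerivAt φ' (φ'' u) u)
    (z : ℂ) :
    lapR (fun w => φ (‖w‖ ^ 2)) z = 4 * (φ' (‖z‖ ^ 2) + ‖z‖ ^ 2 * φ'' (‖z‖ ^ 2)) := by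
  have hx : pdxR (fun w => φ (‖w‖ ^ 2)) = fun w => φ' (‖w‖ ^ 2) * (2 * ⟪w, 1⟫_ℝ) :=
    funext fun w => by simp [pdxR_radial hφ, Complex.inner]
  have hy : pdyR (fun w => φ (‖w‖ ^ 2)) = fun w => φ' (‖w‖ ^ 2) * (2 * ⟪w, I⟫_ℝ) :=
    funext fun w => by simp [pdyR_radial hφ, Complex.inner]
  rw [lapR, hx, hy, pdxR_eq_deriv_add_ofReal_mul_one, pdyR,
    (hasDerivAt_radial_dirDeriv_along_line hφ' z 1).deriv,
    (hasDerivAt_radial_dirDeriv_along_line hφ' z I).deriv]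
  simp [Complex.inner, Complex.sq_norm, Complex.normSq_apply]
  ring

lemma gradSq_radial (hφ : ∀ u, HasDerivAt φ (φ' u) u) (z : ℂ) :
    gradSq (fun w => φ (‖w‖ ^ 2)) z = 4 * ‖z‖ ^ 2 * φ' (‖z‖ ^ 2) ^ 2 := by
  rw [gradSq, pdxR_radial hφ, pdyR_radial hφ, Complex.sq_norm, Complex.normSq_apply]
  ring

end Radial

noncomputable def krProfile (t u : ℝ) : ℝ :=
  (1 + 2 * Real.cosh (-t) * u + u ^ 2) / (8 * Real.sinh (-t))

lemma krV_eq_krProfile (z : ℂ) (t : ℝ) : krV (z, t) = krProfile t (‖z‖ ^ 2) := by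
  rw [krV, krProfile]
  ring

lemma hasDerivAt_krProfile (t u : ℝ) :
    HasDerivAt (krProfile t) ((Real.cosh (-t) + u) / (4 * Real.sinh (-t))) u := by
  have h := ((((hasDerivAt_id' u).const_mul (2 * Real.cosh (-t))).const_add 1).add
    ((hasDerivAt_id' u).pow 2)).div_const (8 * Real.sinh (-t))
  refine h.congr_deriv ?_
  field_simp
  ring

lemma hasDerivAt_krProfile_deriv (t u : ℝ) :
    HasDerivAt (fun u => (Real.cosh (-t) + u) / (4 * Real.sinh (-t)))
      (1 / (4 * Real.sinh (-t))) u :=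
  ((hasDerivAt_id' u).const_add _).div_const _

lemma krV_mul_lapR_sub_gradSq (z : ℂ) {t : ℝ} (ht : t ≠ 0) :
    krV (z, t) * lapR (fun w => krV (w, t)) z - gradSq (fun w => krV (w, t)) z
      = (Real.cosh (-t) + 2 * ‖z‖ ^ 2 + Real.cosh (-t) * ‖z‖ ^ 4) / (8 * Real.sinh (-t) ^ 2) := by
  have hs : Real.sinh (-t) ≠ 0 := by simpa using ht
  have hv : (fun w => krV (w, t)) = fun w => krProfile t (‖w‖ ^ 2) :=
    funext fun w => krV_eq_krProfile w t
  rw [hv, krV_eq_krProfile, lapR_radial (hasDerivAt_krProfile t) (hasDerivAt_krProfile_deriv t),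
    gradSq_radial (hasDerivAt_krProfile t), krProfile]
  field_simp
  ring

lemma krV_pos (z : ℂ) {t : ℝ} (ht : t < 0) : 0 < krV (z, t) := by
  have hs : 0 < Real.sinh (-t) := Real.sinh_pos_iff.mpr (neg_pos.mpr ht)
  rw [krV]
  positivity

/-- For the King–Rosenau conformal factor and every
`(x,t) ∈ ℝ² × (−∞,0)`,
`v·Δv − ‖∇v‖² = (cosh(−t) + 2‖x‖² + cosh(−t)‖x‖⁴)/(8 sinh(−t)²)`;
in particular `v·Δv − ‖∇v‖² > 0`, so the scalar curvature
`R = v⁻¹(v·Δv − ‖∇v‖²)` of the conformal metric `v⁻¹ δᵢⱼ` is positive. -/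
theorem king_rosenau_positive_curvature :
    ∀ p : ℂ × ℝ, p.2 < 0 →
      (krV p * lapR (fun z => krV (z, p.2)) p.1 - gradSq (fun z => krV (z, p.2)) p.1
        = (Real.cosh (-p.2) + 2 * ‖p.1‖ ^ 2 + Real.cosh (-p.2) * ‖p.1‖ ^ 4)
            / (8 * (Real.sinh (-p.2)) ^ 2)) ∧
      (0 < krV p * lapR (fun z => krV (z, p.2)) p.1
            - gradSq (fun z => krV (z, p.2)) p.1) ∧
      (0 < (krV p)⁻¹ * (krV p * lapR (fun z => krV (z, p.2)) p.1
            - gradSq (fun z => krV (z, p.2)) p.1)) := by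
  rintro ⟨z, t⟩ (ht : t < 0)
  have hs : 0 < Real.sinh (-t) := Real.sinh_pos_iff.mpr (neg_pos.mpr ht)
  have hcurv := krV_mul_lapR_sub_gradSq z ht.ne
  have hpos :
      0 < krV (z, t) * lapR (fun w => krV (w, t)) z - gradSq (fun w => krV (w, t)) z := by
    rw [hcurv]
    positivity
  exact ⟨hcurv, hpos, mul_pos (inv_pos.mpr (krV_pos z ht)) hpos⟩
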